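/- Let T be a finite tree on at least 3 vertices and let G be a finite simple graph with no induced subgraph isomorphic to T. Then every complete expansion 𝕂[G] of G (with arbitrary positive clique sizes m_v) has no induced subgraph isomorphic to T. -/

import Mathlib

/-!
Two vertices of an induced copy of `T` in `𝕂[G]` that lie in the same clique are adjacent true
twins of `T`. A tree on at least three vertices has none: some vertex outside an edge `ab` is
adjacent to `a` or `b`, and being adjacent to both would close a triangle. So projecting the copy
onto `G` is injective, and it is then an induced embedding of `T` into `G`.
-/

open SimpleGraph
open scoped Classical

/-- The lexicographic product `G[H]`. -/
def lexProd {α β : Type*} (G : SimpleGraph α) (H : SimpleGraph β) :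
    SimpleGraph (α × β) where
  Adj x y := G.Adj x.1 y.1 ∨ (x.1 = y.1 ∧ H.Adj x.2 y.2)
  symm := by
    refine ⟨?_⟩
    rintro x y (h | ⟨h1, h2⟩)
    · exact Or.inl h.symm
    · exact Or.inr ⟨h1.symm, h2.symm⟩
  loopless := by
    refine ⟨?_⟩
    rintro x (h | ⟨-, h2⟩)
    · exact G.loopless.irrefl _ h
    · exact H.loopless.irrefl _ h2

/-- `AnnWins G k c`: starting from the partial proper coloring `c`, Ann (who presents
uncolored vertices one at a time) has a strategy so that Ben (who properly colors each
presented vertex with one of `k` colors) can always move, and the whole graph gets colored. -/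
inductive AnnWins {V : Type*} (G : SimpleGraph V) (k : ℕ) :
    (V → Option (Fin k)) → Prop
  | done (c : V → Option (Fin k)) (h : ∀ v, (c v).isSome) : AnnWins G k c
  | step (c : V → Option (Fin k)) (v : V) (hv : c v = none)
      (hex : ∃ col : Fin k, ∀ u, G.Adj u v → c u ≠ some col)
      (h : ∀ col : Fin k, (∀ u, G.Adj u v → c u ≠ some col) →
        AnnWins G k (Function.update c v (some col))) : AnnWins G k c

/-- A graph is `k`-indicated colorable if Ann wins the indicated coloring game
with `k` colors starting from the empty coloring. -/
def IndicatedColorable {V : Type*} (G : SimpleGraph V) (k : ℕ) : Prop :=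
  AnnWins G k (fun _ => none)

/-- The indicated chromatic number `χᵢ(G)`. -/
noncomputable def indicatedChromaticNumber {V : Type*} (G : SimpleGraph V) : ℕ :=
  sInf {k | IndicatedColorable G k}

/-- The coloring number `col(G)`: the least `d` such that every nonempty set `S` of
vertices contains a vertex with fewer than `d` neighbours in `S`. -/
noncomputable def coloringNumber {V : Type*} (G : SimpleGraph V) : ℕ :=
  sInf {d : ℕ | ∀ S : Set V, S.Nonempty → ∃ v ∈ S, {u ∈ S | G.Adj v u}.ncard < d}

/-- `F`-freeness: no induced subgraph of `G` is isomorphic to `F`. -/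
def IsFreeOf {α β : Type*} (F : SimpleGraph α) (G : SimpleGraph β) : Prop :=
  IsEmpty (F ↪g G)

/-- The complete expansion of `G`, replacing each vertex `v` by a clique on `m v` vertices. -/
def completeExpansion {V : Type*} (G : SimpleGraph V) (m : V → ℕ) :
    SimpleGraph (Σ v, Fin (m v)) where
  Adj x y := G.Adj x.1 y.1 ∨ (x.1 = y.1 ∧ x ≠ y)
  symm := by
    refine ⟨?_⟩
    rintro x y (h | ⟨h1, h2⟩)
    · exact Or.inl h.symm
    · exact Or.inr ⟨h1.symm, h2.symm⟩
  loopless := by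
    refine ⟨?_⟩
    rintro x (h | ⟨-, h2⟩)
    · exact G.loopless.irrefl _ h
    · exact h2 rfl

/-- The independent expansion of `G`, replacing each vertex `v` by an independent
set of `m v` vertices. -/
def independentExpansion {V : Type*} (G : SimpleGraph V) (m : V → ℕ) :
    SimpleGraph (Σ v, Fin (m v)) where
  Adj x y := G.Adj x.1 y.1
  symm := ⟨fun _ _ h => h.symm⟩
  loopless := ⟨fun _ h => G.loopless.irrefl _ h⟩

namespace SimpleGraph

variable {W : Type*} (F : SimpleGraph W)

/-- True twins are adjacent vertices with the same closed neighbourhood; here, for every edge, a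
third vertex separating its ends. -/
def HasNoTrueTwins : Prop :=
  ∀ ⦃a b : W⦄, F.Adj a b → ∃ d, d ≠ a ∧ d ≠ b ∧ ¬(F.Adj d a ↔ F.Adj d b)

variable {F}

theorem IsAcyclic.not_adj_of_adj_of_adj (hF : F.IsAcyclic) {a b d : W} (hda : F.Adj d a)
    (hdb : F.Adj d b) : ¬F.Adj a b := fun hab =>
  hF.cliqueFree le_rfl {d, a, b} (is3Clique_triple_iff.mpr ⟨hda, hdb, hab⟩)

theorem Connected.exists_adj_of_mem_of_notMem (hF : F.Connected) {S : Set W} {a c : W}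
    (ha : a ∈ S) (hc : c ∉ S) : ∃ d ∉ S, ∃ s ∈ S, F.Adj d s := by
  obtain ⟨d, -, hd, hs⟩ := (hF.preconnected c a).some.exists_boundary_dart Sᶜ hc (by simpa)
  exact ⟨d.fst, hd, d.snd, not_not.mp hs, d.adj⟩

theorem IsTree.hasNoTrueTwins [Fintype W] (hF : F.IsTree) (hW : 3 ≤ Fintype.card W) :
    F.HasNoTrueTwins := by
  intro a b hab
  obtain ⟨c, hc⟩ : ({a, b}ᶜ : Finset W).Nonempty := by
    rw [← Finset.card_pos, Finset.card_compl, Finset.card_pair hab.ne]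
    omega
  obtain ⟨d, hd, s, hs, hds⟩ := hF.connected.exists_adj_of_mem_of_notMem
    (S := {a, b}) (Set.mem_insert a _) (by simpa using hc)
  simp only [Set.mem_insert_iff, Set.mem_singleton_iff, not_or] at hd hs
  refine ⟨d, hd.1, hd.2, fun hiff => ?_⟩
  have hboth : F.Adj d a ∧ F.Adj d b := by
    rcases hs with rfl | rfl
    · exact ⟨hds, hiff.mp hds⟩
    · exact ⟨hiff.mpr hds, hds⟩
  exact hF.isAcyclic.not_adj_of_adj_of_adj hboth.1 hboth.2 hab

end SimpleGraph

section CompleteExpansion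

variable {V : Type*} {G : SimpleGraph V} {m : V → ℕ}

theorem completeExpansion_adj_iff_of_fst_ne {x y : Σ v, Fin (m v)} (h : x.1 ≠ y.1) :
    (completeExpansion G m).Adj x y ↔ G.Adj x.1 y.1 := by
  simp [completeExpansion, h]

namespace SimpleGraph.HasNoTrueTwins

variable {W : Type*} {F : SimpleGraph W}

theorem injective_fst_comp (hF : F.HasNoTrueTwins)
    (f : F ↪g completeExpansion G m) : Function.Injective (Sigma.fst ∘ f) := by
  intro a b hab
  by_contra hne
  have hadj : F.Adj a b := f.map_rel_iff.mp (Or.inr ⟨hab, f.injective.ne hne⟩)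
  obtain ⟨d, hda, hdb, hd⟩ := hF hadj
  apply hd
  by_cases hdfa : (f d).1 = (f a).1
  · exact iff_of_true (f.map_rel_iff.mp (Or.inr ⟨hdfa, f.injective.ne hda⟩))
      (f.map_rel_iff.mp (Or.inr ⟨hdfa.trans hab, f.injective.ne hdb⟩))
  · have hdfb : (f d).1 ≠ (f b).1 := fun h => hdfa (h.trans hab.symm)
    rw [← f.map_rel_iff, ← f.map_rel_iff, completeExpansion_adj_iff_of_fst_ne hdfa,
      completeExpansion_adj_iff_of_fst_ne hdfb]
    exact Iff.of_eq (congrArg _ hab)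

def embeddingOfCompleteExpansion (hF : F.HasNoTrueTwins)
    (f : F ↪g completeExpansion G m) : F ↪g G where
  toFun := Sigma.fst ∘ f
  inj' := hF.injective_fst_comp f
  map_rel_iff' {a b} := by
    refine ⟨fun h => f.map_rel_iff.mp (Or.inl h), fun h => ?_⟩
    exact (completeExpansion_adj_iff_of_fst_ne ((hF.injective_fst_comp f).ne (F.ne_of_adj h))).mp
      (f.map_rel_iff.mpr h)

theorem isFreeOf_completeExpansion (hF : F.HasNoTrueTwins) (hG : IsFreeOf F G) :
    IsFreeOf F (completeExpansion G m) :=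
  ⟨fun f => hG.false (hF.embeddingOfCompleteExpansion f)⟩

end SimpleGraph.HasNoTrueTwins

end CompleteExpansion

theorem completeExpansion_treeFree_general {V W : Type*} [Fintype W]
    (T : SimpleGraph W) (hT : T.IsTree) (hW : 3 ≤ Fintype.card W)
    (G : SimpleGraph V) (hG : IsFreeOf T G) (m : V → ℕ) :
    IsFreeOf T (completeExpansion G m) :=
  (hT.hasNoTrueTwins hW).isFreeOf_completeExpansion hG

/-- If `T` is a tree on at least 3 vertices and `G` is `T`-free, then every complete
expansion of `G` is `T`-free. -/
theorem completeExpansion_treeFree {V W : Type*} [Fintype V] [Fintype W]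
    (T : SimpleGraph W) (hT : T.IsTree) (hW : 3 ≤ Fintype.card W)
    (G : SimpleGraph V) (hG : IsFreeOf T G) (m : V → ℕ) (hm : ∀ v, 0 < m v) :
    IsFreeOf T (completeExpansion G m) :=
  completeExpansion_treeFree_general T hT hW G hG m
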